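/- arXiv:math/0509475 — 9 statements merged into one kernel-verified Lean document; each statement's English description precedes it below -/
import Mathlib

section
/- Let R be a commutative ring, P a finite subset of R, and P_0,...,P_r subsets of P such that (i) the union of the P_l equals P; (ii) P_0 has exactly one element; (iii) for any two distinct elements p, p'' of P_l (0 < l ≤ r) there exist l' < l and an element p' ∈ P_{l'} such that (p·p'')^m lies in the ideal (p') for some positive integer m. For each l set q_l = Σ_{p ∈ P_l} p^{e(p)} for arbitrary integers e(p) ≥ 1. Then the radical of the ideal generated by P equals the radical of the ideal (q_0,...,q_r). -/
/-!
Work in the radical `J` of `(q 0, ..., q r)` and show `P l ⊆ J` by well-founded induction on `l`.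
For `p ∈ P l` we have `p ^ (e p + 1) = p * q l - ∑ p * p'' ^ e p''` over the other `p'' ∈ P l`;
each `p * p''` lies in the radical of some `(p')` with `p'` from an earlier layer, hence in `J`,
so `p ^ (e p + 1) ∈ J`. The reverse inclusion holds because every `q l` lies in `(P)`.
-/

namespace Ideal

variable {R : Type*} [CommRing R]

theorem mem_radical_of_sum_pow_mem [DecidableEq R] {I : Ideal R} {s : Finset R} {p : R}
    (hp : p ∈ s) (e : R → ℕ) (hsum : ∑ x ∈ s, x ^ e x ∈ I.radical)
    (he : ∀ x ∈ s.erase p, e x ≠ 0) (hcross : ∀ x ∈ s.erase p, p * x ∈ I.radical) :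
    p ∈ I.radical := by
  have hpow : p ^ (e p + 1) = p * ∑ x ∈ s, x ^ e x - ∑ x ∈ s.erase p, p * x ^ e x := by
    rw [Finset.mul_sum, ← Finset.add_sum_erase _ _ hp, pow_succ']
    ring
  refine mem_radical_of_pow_mem (m := e p + 1) (hpow ▸ sub_mem (mul_mem_left _ p hsum) ?_)
  exact sum_mem _ fun x hx =>
    I.radical.mem_of_dvd (mul_dvd_mul_left p (dvd_pow_self x (he x hx))) (hcross x hx)

theorem mem_radical_of_layered [DecidableEq R] {ι : Type*} [LT ι] [WellFoundedLT ι]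
    (I : Ideal R) (Pl : ι → Finset R) (e : R → ℕ) (he : ∀ l, ∀ p ∈ Pl l, e p ≠ 0)
    (hq : ∀ l, ∑ p ∈ Pl l, p ^ e p ∈ I)
    (hlayer : ∀ l, ∀ p ∈ Pl l, ∀ p'' ∈ Pl l, p ≠ p'' →
      ∃ l' < l, ∃ p' ∈ Pl l', p * p'' ∈ (span {p'}).radical)
    (l : ι) : ∀ p ∈ Pl l, p ∈ I.radical := by
  induction l using WellFoundedLT.induction with
  | _ l ih =>
  intro p hp
  refine mem_radical_of_sum_pow_mem hp e (le_radical (hq l))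
    (fun x hx => he l x (Finset.mem_of_mem_erase hx)) fun x hx => ?_
  obtain ⟨l', hl', p', hp', hpx⟩ :=
    hlayer l p hp x (Finset.mem_of_mem_erase hx) (Finset.ne_of_mem_erase hx).symm
  have hp'I : span {p'} ≤ I.radical := (span_singleton_le_iff_mem _).2 (ih l' hl' p' hp')
  simpa only [radical_idem] using radical_mono hp'I hpx

end Ideal

theorem schmitt_vogel_general {R : Type*} [CommRing R] [DecidableEq R] (r : ℕ) (P : Finset R)
    (Pl : Fin (r + 1) → Finset R)
    (hcover : (Finset.univ.biUnion Pl) = P)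
    (hP0 : (Pl 0).card = 1)
    (hiii : ∀ l : Fin (r + 1), 0 < l → ∀ p ∈ Pl l, ∀ p'' ∈ Pl l, p ≠ p'' →
      ∃ l' : Fin (r + 1), l' < l ∧ ∃ p' ∈ Pl l', ∃ m : ℕ, 0 < m ∧
        (p * p'') ^ m ∈ Ideal.span ({p'} : Set R))
    (e : R → ℕ) (he : ∀ p ∈ P, 1 ≤ e p)
    (q : Fin (r + 1) → R) (hq : ∀ l, q l = ∑ p ∈ Pl l, p ^ e p) :
    (Ideal.span (P : Set R)).radical = (Ideal.span (Set.range q)).radical := by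
  have hsub (l) : Pl l ⊆ P := hcover ▸ Finset.subset_biUnion_of_mem Pl (Finset.mem_univ l)
  have hlayer : ∀ l, ∀ p ∈ Pl l, ∀ p'' ∈ Pl l, p ≠ p'' →
      ∃ l' < l, ∃ p' ∈ Pl l', p * p'' ∈ (Ideal.span {p'}).radical := by
    intro l p hp p'' hp'' hne
    have hl : 0 < l := Fin.pos_iff_ne_zero.2 <| by
      rintro rfl
      exact hne (Finset.card_le_one.1 hP0.le p hp p'' hp'')
    obtain ⟨l', hl', p', hp', m, -, hm⟩ := hiii l hl p hp p'' hp'' hne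
    exact ⟨l', hl', p', hp', m, hm⟩
  apply le_antisymm
  · rw [Ideal.radical_le_radical_iff, Ideal.span_le, ← hcover]
    intro p hp
    obtain ⟨l, -, hpl⟩ := Finset.mem_biUnion.1 hp
    exact Ideal.mem_radical_of_layered _ Pl e (fun l p hp => Nat.one_le_iff_ne_zero.1 (he p (hsub l hp)))
      (fun l => hq l ▸ Ideal.subset_span ⟨l, rfl⟩) hlayer l p hpl
  · refine Ideal.radical_mono (Ideal.span_le.2 ?_)
    rintro _ ⟨l, rfl⟩
    rw [hq]
    exact Ideal.sum_mem _ fun p hp =>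
      Ideal.pow_mem_of_mem _ (Ideal.subset_span (hsub l hp)) _ (he p (hsub l hp))

/-- Schmitt–Vogel lemma: if `P` is a finite subset of a commutative ring `R`,
covered by subsets `P 0, ..., P r` such that `P 0` is a singleton and any two
distinct elements `p, p''` of `P l` (for `0 < l`) admit `l' < l` and `p' ∈ P l'`
with `(p * p'')^m ∈ (p')` for some `m ≥ 1`, then for any choice of exponents
`e ≥ 1`, setting `q l = ∑_{p ∈ P l} p ^ e p`, the radical of the ideal generated
by `P` equals the radical of `(q 0, ..., q r)`. -/
theorem schmitt_vogel {R : Type*} [CommRing R] [DecidableEq R] (r : ℕ) (P : Finset R)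
    (Pl : Fin (r + 1) → Finset R)
    (hcover : (Finset.univ.biUnion Pl) = P)
    (hsub : ∀ l, Pl l ⊆ P)
    (hP0 : (Pl 0).card = 1)
    (hiii : ∀ l : Fin (r + 1), 0 < l → ∀ p ∈ Pl l, ∀ p'' ∈ Pl l, p ≠ p'' →
      ∃ l' : Fin (r + 1), l' < l ∧ ∃ p' ∈ Pl l', ∃ m : ℕ, 0 < m ∧
        (p * p'') ^ m ∈ Ideal.span ({p'} : Set R))
    (e : R → ℕ) (he : ∀ p ∈ P, 1 ≤ e p)
    (q : Fin (r + 1) → R) (hq : ∀ l, q l = ∑ p ∈ Pl l, p ^ e p) :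
    (Ideal.span (P : Set R)).radical = (Ideal.span (Set.range q)).radical :=
  schmitt_vogel_general r P Pl hcover hP0 hiii e he q hq
end

section
/- In the polynomial ring K[X_1,...,X_5] over a field K, let J = (X_1X_4 - X_2X_3, X_1X_5, X_3X_5), and let P_1 = (X_1X_4 - X_2X_3)X_2 + X_1X_5 and P_2 = (X_1X_4 - X_2X_3)X_4 + X_3X_5. Then J = √(P_1, P_2), i.e., J is a set-theoretic complete intersection on P_1 and P_2. -/
/-!
With variables indexed from `0`, write `f = X₀X₃ - X₁X₂`, so `P₁ = fX₁ + X₀X₄` and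
`P₂ = fX₃ + X₂X₄`. The ideal `J = (f, X₀X₄, X₂X₄)` is the intersection of the primes `(f, X₄)`
and `(X₀, X₂)`, hence radical; since it contains `I = (P₁, P₂)` we get `√I ⊆ J`. Conversely
`f³ = -X₂f·P₁ + X₀f·P₂ ∈ I`, and then `X₀X₄ = P₁ - X₁f` and `X₂X₄ = P₂ - X₃f` lie in `√I`.

Both primes are preimages of primes under `killCompl`, which kills variables. For `(f, X₄)` this
reduces to `f` being prime in `K[X₀, X₁, X₂, X₃]`: as a polynomial in `X₀` it is `X₃·X₀ - X₁X₂`,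
linear with coprime coefficients over a unique factorization domain.
-/

open MvPolynomial

namespace MvPolynomial

variable {R σ τ : Type*} [CommRing R]

theorem sub_mem_of_forall_X_sub_mem {I : Ideal (MvPolynomial σ R)}
    {φ : MvPolynomial σ R →ₐ[R] MvPolynomial σ R} (h : ∀ i, X i - φ (X i) ∈ I)
    (p : MvPolynomial σ R) : p - φ p ∈ I := by
  have hφ : (Ideal.Quotient.mkₐ R I).comp φ = Ideal.Quotient.mkₐ R I :=
    algHom_ext fun i => by simpa using (Ideal.Quotient.eq.mpr (h i)).symm
  exact Ideal.Quotient.eq.mp (DFunLike.congr_fun hφ p).symm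

section killCompl

variable {f : τ → σ} (hf : Function.Injective f)

theorem killCompl_X_of_notMem_range {j : σ} (hj : j ∉ Set.range f) :
    killCompl hf (X j : MvPolynomial σ R) = 0 := by
  simp [killCompl, hj]

theorem comap_killCompl (I : Ideal (MvPolynomial τ R)) :
    I.comap (killCompl hf) = I.map (rename f) ⊔ Ideal.span (X '' (Set.range f)ᶜ) := by
  refine le_antisymm (fun p hp => ?_) (sup_le ?_ ?_)
  · have hrest : p - rename f (killCompl hf p) ∈ Ideal.span (X '' (Set.range f)ᶜ) := by
      refine sub_mem_of_forall_X_sub_mem (φ := (rename f).comp (killCompl hf)) (fun j => ?_) p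
      by_cases hj : j ∈ Set.range f
      · obtain ⟨i, rfl⟩ := hj
        have h := killCompl_rename_app hf (X i : MvPolynomial τ R)
        rw [rename_X] at h
        simp [h]
      · simpa [killCompl_X_of_notMem_range hf hj] using
          Ideal.subset_span (Set.mem_image_of_mem X hj)
    simpa using Submodule.add_mem_sup (Ideal.mem_map_of_mem (rename f) hp) hrest
  · rw [Ideal.map_le_iff_le_comap]
    intro p hp
    simpa [Ideal.mem_comap, killCompl_rename_app] using hp
  · rw [Ideal.span_le]
    rintro _ ⟨j, hj, rfl⟩
    simp [killCompl_X_of_notMem_range hf hj]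

end killCompl

theorem isPrime_map_rename_sup_span_X {f : τ → σ} (hf : Function.Injective f)
    {P : Ideal (MvPolynomial τ R)} [P.IsPrime] :
    (P.map (rename f) ⊔ Ideal.span (X '' (Set.range f)ᶜ)).IsPrime := by
  rw [← comap_killCompl hf]
  infer_instance

theorem isPrime_span_X_image [IsDomain R] (s : Set σ) :
    (Ideal.span (X '' s) : Ideal (MvPolynomial σ R)).IsPrime := by
  have h := isPrime_map_rename_sup_span_X (R := R) (P := ⊥)
    (Subtype.val_injective : Function.Injective ((↑) : ↥sᶜ → σ))
  rwa [Ideal.map_bot, bot_sup_eq, Subtype.range_coe, compl_compl] at h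

theorem isPrime_span_rename_castSucc_X_last {n : ℕ} {g : MvPolynomial (Fin n) R}
    (hg : Prime g) :
    (Ideal.span {rename Fin.castSucc g, X (Fin.last n)} :
      Ideal (MvPolynomial (Fin (n + 1)) R)).IsPrime := by
  have := (Ideal.span_singleton_prime hg.ne_zero).mpr hg
  have h := isPrime_map_rename_sup_span_X (Fin.castSucc_injective n) (P := Ideal.span {g})
  have hrange : (Set.range (Fin.castSucc : Fin n → Fin (n + 1)))ᶜ = {Fin.last n} := by
    ext i
    simp only [Fin.range_castSucc, Set.mem_compl_iff, Set.mem_ofPred_eq, not_lt,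
      Set.mem_singleton_iff, Fin.ext_iff, Fin.val_last]
    omega
  rwa [Ideal.map_span, Set.image_singleton, hrange, Set.image_singleton, ← Ideal.span_union,
    Set.singleton_union] at h

theorem prime_X_zero_mul_X_three_sub_X_one_mul_X_two [IsDomain R]
    [UniqueFactorizationMonoid R] :
    Prime (X 0 * X 3 - X 1 * X 2 : MvPolynomial (Fin 4) R) := by
  have hX : Prime (X 2 : MvPolynomial (Fin 3) R) := X_prime
  have hndvd : ¬ (X 2 : MvPolynomial (Fin 3) R) ∣ -(X 0 * X 1) := by
    rw [dvd_neg]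
    intro h
    rcases hX.dvd_or_dvd h with h | h <;> simp at h
  have hirr : Irreducible (Polynomial.C (X 2) * Polynomial.X + Polynomial.C (-(X 0 * X 1)) :
      Polynomial (MvPolynomial (Fin 3) R)) :=
    Polynomial.irreducible_C_mul_X_add_C hX.ne_zero
      (hX.irreducible.isRelPrime_iff_not_dvd.mpr hndvd)
  rw [← MulEquiv.prime_iff (finSuccEquiv R 3).toMulEquiv]
  convert hirr.prime using 1
  change finSuccEquiv R 3 _ = _
  rw [show (1 : Fin 4) = Fin.succ 0 from rfl, show (2 : Fin 4) = Fin.succ 1 from rfl,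
    show (3 : Fin 4) = Fin.succ 2 from rfl]
  simp only [map_sub, map_mul, finSuccEquiv_X_zero, finSuccEquiv_X_succ, map_neg]
  ring

end MvPolynomial

theorem Ideal.span_pair_inf_eq_of_mem_of_notMem {R : Type*} [CommRing R] {a b : R}
    {P : Ideal R} [hP : P.IsPrime] (ha : a ∈ P) (hb : b ∉ P) :
    Ideal.span {a, b} ⊓ P = Ideal.span {a} ⊔ P * Ideal.span {b} := by
  have hbP : Ideal.span {b} ⊓ P = P * Ideal.span {b} := by
    refine le_antisymm ?_ (Ideal.mul_le_inf.trans (inf_comm _ _).le)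
    rintro x ⟨hxb, hxP⟩
    obtain ⟨y, rfl⟩ := Ideal.mem_span_singleton'.mp hxb
    exact Ideal.mul_mem_mul ((hP.mem_or_mem hxP).resolve_right hb)
      (Ideal.mem_span_singleton_self b)
  rw [Ideal.span_insert, sup_inf_assoc_of_le _ ((Ideal.span_singleton_le_iff_mem P).mpr ha), hbP]

/-- The ideal `J = (X₁X₄ - X₂X₃, X₁X₅, X₃X₅)` in `K[X₁,...,X₅]` is a set-theoretic
complete intersection on `P₁ = (X₁X₄ - X₂X₃)X₂ + X₁X₅` and
`P₂ = (X₁X₄ - X₂X₃)X₄ + X₃X₅`, i.e. `J = √(P₁, P₂)`. -/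
theorem stci_example4 (K : Type*) [Field K] :
    (Ideal.span ({X 0 * X 3 - X 1 * X 2, X 0 * X 4, X 2 * X 4} :
        Set (MvPolynomial (Fin 5) K))) =
      (Ideal.span ({(X 0 * X 3 - X 1 * X 2) * X 1 + X 0 * X 4,
        (X 0 * X 3 - X 1 * X 2) * X 3 + X 2 * X 4} :
          Set (MvPolynomial (Fin 5) K))).radical := by
  set f : MvPolynomial (Fin 5) K := X 0 * X 3 - X 1 * X 2
  set J := Ideal.span {f, X 0 * X 4, X 2 * X 4}
  set I := Ideal.span {f * X 1 + X 0 * X 4, f * X 3 + X 2 * X 4}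
  have hQ₁ : (Ideal.span {f, X 4}).IsPrime := by
    convert isPrime_span_rename_castSucc_X_last
      (prime_X_zero_mul_X_three_sub_X_one_mul_X_two (R := K)) using 4
    · simp [f]
    · rfl
  have hQ₂ : (Ideal.span {X 0, X 2} : Ideal (MvPolynomial (Fin 5) K)).IsPrime := by
    simpa [Set.image_pair] using isPrime_span_X_image (R := K) ({0, 2} : Set (Fin 5))
  have hJ : J = Ideal.span {f, X 4} ⊓ Ideal.span {X 0, X 2} := by
    have hfQ₂ : f ∈ Ideal.span {X 0, X 2} := Ideal.mem_span_pair.mpr ⟨X 3, -X 1, by ring⟩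
    have hX₄ : (X 4 : MvPolynomial (Fin 5) K) ∉ Ideal.span {X 0, X 2} := fun h => by
      obtain ⟨a, b, hab⟩ := Ideal.mem_span_pair.mp h
      simpa using congrArg (aeval (![0, 0, 0, 0, 1] : Fin 5 → K)) hab
    rw [Ideal.span_pair_inf_eq_of_mem_of_notMem hfQ₂ hX₄, Ideal.span_mul_span', Set.mul_singleton,
      Set.image_pair, ← Ideal.span_insert]
  have hJrad : J.IsRadical := hJ ▸ hQ₁.isRadical.inf hQ₂.isRadical
  refine le_antisymm ?_ (hJrad.radical_le_iff.mpr ?_)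
  · have hfI : f ∈ I.radical := ⟨3, Ideal.mem_span_pair.mpr ⟨-(X 2 * f), X 0 * f, by ring⟩⟩
    have hP₁ : f * X 1 + X 0 * X 4 ∈ I.radical := I.le_radical (Ideal.subset_span (by simp))
    have hP₂ : f * X 3 + X 2 * X 4 ∈ I.radical := I.le_radical (Ideal.subset_span (by simp))
    rw [Ideal.span_le]
    rintro _ (rfl | rfl | rfl)
    · exact hfI
    · simpa using sub_mem hP₁ (I.radical.mul_mem_right (X 1) hfI)
    · simpa using sub_mem hP₂ (I.radical.mul_mem_right (X 3) hfI)
  · have hfJ : f ∈ J := Ideal.subset_span (by simp)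
    rw [Ideal.span_le]
    rintro _ (rfl | rfl) <;> exact add_mem (J.mul_mem_right _ hfJ) (Ideal.subset_span (by simp))
end

section
/- Let K be a field. For points t = (t_1,...,t_6) ∈ K^6, the common zero set of F_1 = t_3t_5 - t_4^2, G_1 = t_1t_5 + t_3t_6, G_2 = t_1t_6 equals the common zero set of the six polynomials t_3t_5 - t_4^2, t_1t_4, t_1t_5, t_1t_6, t_3t_6, t_4t_6. -/
/-! Since `t₁t₆ = 0`, either `t₁ = 0` or `t₆ = 0`, and then `G₁` reduces to `t₃t₆ = 0` resp.
`t₁t₅ = 0`. The remaining products `t₄t₆` and `t₁t₄` vanish because `t₄² = t₃t₅`: if `x` kills one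
factor of `b² = a c`, then `(b x)² = (a x)(c x) = 0`. -/

theorem mul_eq_zero_of_sq_eq_mul_of_mul_eq_zero {R : Type*} [CommSemiring R] [IsReduced R]
    {a b c x : R} (h : b ^ 2 = a * c) (hx : a * x = 0) : b * x = 0 :=
  IsReduced.eq_zero _ ⟨2, calc
    (b * x) ^ 2 = (a * x) * (c * x) := by rw [mul_pow, h]; ring
    _ = 0 := by rw [hx, zero_mul]⟩

/-- Over a field `K`, the common zero set in `K⁶` of `F₁ = t₃t₅ - t₄²`,
`G₁ = t₁t₅ + t₃t₆`, `G₂ = t₁t₆` equals the common zero set of the six polynomials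
`t₃t₅ - t₄²`, `t₁t₄`, `t₁t₅`, `t₁t₆`, `t₃t₆`, `t₄t₆`. -/
theorem fiber_cone_zeroset (K : Type*) [Field K] :
    {t : Fin 6 → K |
        t 2 * t 4 - (t 3) ^ 2 = 0 ∧ t 0 * t 4 + t 2 * t 5 = 0 ∧ t 0 * t 5 = 0} =
      {t : Fin 6 → K |
        t 2 * t 4 - (t 3) ^ 2 = 0 ∧ t 0 * t 3 = 0 ∧ t 0 * t 4 = 0 ∧
        t 0 * t 5 = 0 ∧ t 2 * t 5 = 0 ∧ t 3 * t 5 = 0} := by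
  ext t
  simp only [Set.mem_ofPred_eq]
  constructor
  · rintro ⟨hF, hG₁, hG₂⟩
    have hsq : t 3 ^ 2 = t 2 * t 4 := (sub_eq_zero.mp hF).symm
    rcases mul_eq_zero.mp hG₂ with h0 | h5
    · have h25 : t 2 * t 5 = 0 := by simpa [h0] using hG₁
      exact ⟨hF, by simp [h0], by simp [h0], hG₂, h25,
        mul_eq_zero_of_sq_eq_mul_of_mul_eq_zero hsq h25⟩
    · have h04 : t 0 * t 4 = 0 := by simpa [h5] using hG₁
      have h30 : t 3 * t 0 = 0 :=
        mul_eq_zero_of_sq_eq_mul_of_mul_eq_zero (hsq.trans (mul_comm _ _)) (by rwa [mul_comm])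
      exact ⟨hF, by rwa [mul_comm], h04, hG₂, by simp [h5], by simp [h5]⟩
  · rintro ⟨hF, -, h04, h05, h25, -⟩
    exact ⟨hF, by rw [h04, h25, add_zero], h05⟩
end

section
/- Let K be a field and let G_k = Σ_{i=1}^{r-k} X^i_1 X^{i+k}_{c_{i+k}+1} in a polynomial ring over K (for k = 1,...,r−1), where all the variables X^i_1 and X^{i+k}_{c_{i+k}+1} appearing are distinct indeterminates. If a point x makes all G_k vanish, then every individual monomial x^i_1 x^{i+k}_{c_{i+k}+1} vanishes, for all 1 ≤ i ≤ r−1 and 1 ≤ k ≤ r−i. -/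
/-!
The products `a i * b j` form a matrix of rank at most one, so
`(a i * b j) * (a m * b n) = (a m * b j) * (a i * b n)`, and `G_k` is the sum along its `k`-th
superdiagonal. Argue by descending induction on `k`: multiplying `G_k = 0` by one of its terms
`a i * b (i + k)`, each cross term swaps into a product containing an entry farther from the
diagonal, which vanishes by induction; what is left is the square of the term, so the term
vanishes as the ring is reduced.
-/

theorem Finset.eq_zero_of_sum_eq_zero_of_mul_eq_zero {R ι : Type*} [Semiring R] [IsReduced R]
    {s : Finset ι} {f : ι → R} {i : ι} (hs : ∑ m ∈ s, f m = 0) (hi : i ∈ s)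
    (hf : ∀ m ∈ s, m ≠ i → f i * f m = 0) : f i = 0 := by
  have hsq : f i ^ 2 = 0 := by
    rw [sq, ← Finset.sum_eq_single_of_mem i hi hf, ← Finset.mul_sum, hs, mul_zero]
  exact IsNilpotent.eq_zero ⟨2, hsq⟩

theorem mul_eq_zero_of_superdiagonal_sums_eq_zero {R : Type*} [CommSemiring R] [IsReduced R]
    {r : ℕ} {a b : ℕ → R}
    (hG : ∀ k, 1 ≤ k → k ≤ r - 1 → ∑ i ∈ Finset.Icc 1 (r - k), a i * b (i + k) = 0)
    (i j : ℕ) (hi : 1 ≤ i) (hij : i < j) (hj : j ≤ r) : a i * b j = 0 := by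
  have hdiag : a i * b (i + (j - i)) = 0 := by
    refine Finset.eq_zero_of_sum_eq_zero_of_mul_eq_zero (f := fun m => a m * b (m + (j - i)))
      (hG (j - i) (by omega) (by omega))
      (Finset.mem_Icc.mpr ⟨hi, by omega⟩) fun m hm hmi => ?_
    rw [Finset.mem_Icc] at hm
    rw [Nat.add_sub_of_le hij.le,
      show a i * b j * (a m * b (m + (j - i))) = a m * b j * (a i * b (m + (j - i))) by ring]
    rcases lt_or_gt_of_ne hmi with hmi | hmi
    · rw [mul_eq_zero_of_superdiagonal_sums_eq_zero hG m j hm.1 (by omega) hj, zero_mul]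
    · rw [mul_eq_zero_of_superdiagonal_sums_eq_zero hG i (m + (j - i)) hi (by omega) (by omega),
        mul_zero]
  rwa [Nat.add_sub_of_le hij.le] at hdiag
termination_by r - (j - i)
decreasing_by all_goals omega

theorem Gk_monomials_vanish_general (K : Type*) [Field K]
    (r : ℕ) (a b : ℕ → K)
    (hG : ∀ k, 1 ≤ k → k ≤ r - 1 → ∑ i ∈ Finset.Icc 1 (r - k), a i * b (i + k) = 0) :
    ∀ i k, 1 ≤ i → i ≤ r - 1 → 1 ≤ k → k ≤ r - i → a i * b (i + k) = 0 :=
  fun i k hi _ hk hik => mul_eq_zero_of_superdiagonal_sums_eq_zero hG i (i + k) hi (by omega)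
    (by omega)

/-- Let `K` be an algebraically closed field, `r ≥ 2`, and let `a i` (the values `x^i_1`)
and `b i` (the values `x^i_{c_i+1}`) be the values at a point of the distinct
indeterminates occurring in the polynomials `G_k = ∑_{i=1}^{r-k} X^i_1 X^{i+k}_{c_{i+k}+1}`.
If all `G_k` (for `1 ≤ k ≤ r-1`) vanish at the point, then every individual monomial
`x^i_1 x^{i+k}_{c_{i+k}+1}` vanishes, for all `1 ≤ i ≤ r-1` and `1 ≤ k ≤ r-i`. -/
theorem Gk_monomials_vanish (K : Type*) [Field K] [IsAlgClosed K]
    (r : ℕ) (hr : 2 ≤ r) (a b : ℕ → K)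
    (hG : ∀ k, 1 ≤ k → k ≤ r - 1 → ∑ i ∈ Finset.Icc 1 (r - k), a i * b (i + k) = 0) :
    ∀ i k, 1 ≤ i → i ≤ r - 1 → 1 ≤ k → k ≤ r - i → a i * b (i + k) = 0 :=
  Gk_monomials_vanish_general K r a b hG
end

section
/- Let a_{1}, ..., a_{r} and b_{1}, ..., b_{r} be elements of a field K such that Σ_{i=1}^{r-k} a_i b_{i+k} = 0 for every k = 1, ..., r−1. Then a_i b_j = 0 for all 1 ≤ i < j ≤ r. -/
/-!
Induct downwards on the gap `d = j - i`. Once every product `a i * b j` with `j - i > d` vanishes,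
the summands `x i = a i * b (i + d)` of the `d`-th relation are pairwise orthogonal, because
`x i * x j = (a i * b (j + d)) * (a j * b (i + d))` and one of the two factors has a wider gap.
Multiplying the relation `∑ x = 0` by `x i` then gives `x i ^ 2 = 0`, hence `x i = 0`.
-/

theorem Finset.eq_zero_of_sum_eq_zero_of_mul_eq_zero_s13 {ι R : Type*} [CommSemiring R] [IsReduced R]
    {s : Finset ι} {x : ι → R} (hsum : ∑ j ∈ s, x j = 0)
    (horth : ∀ j ∈ s, ∀ k ∈ s, j ≠ k → x j * x k = 0) {i : ι} (hi : i ∈ s) : x i = 0 := by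
  have hsq : x i ^ 2 = 0 := by
    calc x i ^ 2 = ∑ j ∈ s, x i * x j := by
          rw [Finset.sum_eq_single_of_mem i hi fun j hj hji => horth i hi j hj hji.symm, sq]
      _ = 0 := by rw [← Finset.mul_sum, hsum, mul_zero]
  exact IsReduced.eq_zero _ ⟨2, hsq⟩

section ShiftedSums

variable {R : Type*} [CommSemiring R] [IsReduced R] {r : ℕ} {a b : ℕ → R}

theorem mul_shift_eq_zero_of_wider_gaps
    (hG : ∀ k, 1 ≤ k → k ≤ r - 1 → ∑ i ∈ Finset.Icc 1 (r - k), a i * b (i + k) = 0)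
    {d : ℕ} (hd : 0 < d) (hwider : ∀ i j, 1 ≤ i → i + d < j → j ≤ r → a i * b j = 0)
    {i : ℕ} (hi : 1 ≤ i) (hir : i + d ≤ r) : a i * b (i + d) = 0 := by
  have hcross : ∀ j ∈ Finset.Icc 1 (r - d), ∀ k ∈ Finset.Icc 1 (r - d), j < k →
      (a j * b (j + d)) * (a k * b (k + d)) = 0 := by
    intro j hj k hk hjk
    rw [Finset.mem_Icc] at hj hk
    calc (a j * b (j + d)) * (a k * b (k + d)) = (a j * b (k + d)) * (a k * b (j + d)) := by ring
      _ = 0 := by rw [hwider j (k + d) hj.1 (by omega) (by omega), zero_mul]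
  refine Finset.eq_zero_of_sum_eq_zero_of_mul_eq_zero_s13 (hG d hd (by omega)) ?_
    (Finset.mem_Icc.mpr ⟨hi, by omega⟩)
  intro j hj k hk hjk
  rcases hjk.lt_or_gt with hlt | hgt
  · exact hcross j hj k hk hlt
  · rw [mul_comm]
    exact hcross k hk j hj hgt

theorem mul_eq_zero_of_shifted_sums_eq_zero
    (hG : ∀ k, 1 ≤ k → k ≤ r - 1 → ∑ i ∈ Finset.Icc 1 (r - k), a i * b (i + k) = 0)
    {d : ℕ} (hd : 0 < d) : ∀ i j, 1 ≤ i → i + d ≤ j → j ≤ r → a i * b j = 0 := by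
  intro i j hi hij hj
  have hwider : ∀ i j, 1 ≤ i → i + d < j → j ≤ r → a i * b j = 0 :=
    fun i j hi hij hj => mul_eq_zero_of_shifted_sums_eq_zero hG (d := d + 1) (by omega) i j hi hij hj
  rcases hij.lt_or_eq with hlt | rfl
  · exact hwider i j hi hlt hj
  · exact mul_shift_eq_zero_of_wider_gaps hG hd hwider hi hj
termination_by r - d
decreasing_by omega

end ShiftedSums

/-- Let `a 1, ..., a r` and `b 1, ..., b r` be elements of a field `K` such that
`∑_{i=1}^{r-k} a i * b (i+k) = 0` for every `k = 1, ..., r-1`. Then `a i * b j = 0`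
for all `1 ≤ i < j ≤ r`. -/
theorem schmitt_vogel_evaluation (K : Type*) [Field K] (r : ℕ) (a b : ℕ → K)
    (hG : ∀ k, 1 ≤ k → k ≤ r - 1 → ∑ i ∈ Finset.Icc 1 (r - k), a i * b (i + k) = 0) :
    ∀ i j, 1 ≤ i → i < j → j ≤ r → a i * b j = 0 :=
  mul_eq_zero_of_shifted_sums_eq_zero hG one_pos
end

section
/- In the polynomial ring R over a field K in variables a_1,...,a_r, b_1,...,b_r, the radical of the ideal generated by all products a_i b_j with 1 ≤ i < j ≤ r equals the radical of the ideal generated by the r−1 polynomials G_k = Σ_{i=1}^{r-k} a_i b_{i+k}, k = 1,...,r−1. -/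
/-!
The inclusion `⊇` holds because each `G k` is a sum of products `a i * b j` with `i < j`.
For `⊆`, show by downward induction on the gap `k = j - i` that every `a i * b (i + k)` lies in
the radical `I` of the ideal of the `G k`. Multiplying `G k` by `a i * b (i + k)` gives its square
plus the cross terms
`a i b (i + k) a t b (t + k) = (a (min i t) b (max i t + k)) (a (max i t) b (min i t + k))`,
whose first factor has gap larger than `k`; hence the square, and so the product itself, lies in `I`.
-/

open MvPolynomial

section DiagonalSum

variable {R : Type*} [CommRing R] (r : ℕ) (A B : ℕ → R)

def diagonalSum (k : ℕ) : R :=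
  ∑ i ∈ Finset.range (r - k), A i * B (i + k)

variable {r A B} {I : Ideal R}

theorem diagonalSum_mem_of_mul_mem (h : ∀ i j, i < j → j < r → A i * B j ∈ I) {k : ℕ}
    (hk : 1 ≤ k) : diagonalSum r A B k ∈ I :=
  Ideal.sum_mem _ fun i hi => h i (i + k) (by omega) (by simp at hi; omega)

theorem mul_mul_mem_of_wider_mul_mem {k : ℕ} (hwide : ∀ s t, s + k < t → t < r → A s * B t ∈ I)
    {i t : ℕ} (hi : i < r - k) (ht : t < r - k) (hit : i ≠ t) :
    A i * B (i + k) * (A t * B (t + k)) ∈ I := by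
  rcases hit.lt_or_gt with hlt | hgt
  · have h : A i * B (t + k) ∈ I := hwide i (t + k) (by omega) (by omega)
    rw [show A i * B (i + k) * (A t * B (t + k)) = A i * B (t + k) * (A t * B (i + k)) by ring]
    exact I.mul_mem_right _ h
  · have h : A t * B (i + k) ∈ I := hwide t (i + k) (by omega) (by omega)
    rw [show A i * B (i + k) * (A t * B (t + k)) = A t * B (i + k) * (A i * B (t + k)) by ring]
    exact I.mul_mem_right _ h

theorem sq_mem_of_diagonalSum_mem {k : ℕ} (hG : diagonalSum r A B k ∈ I)
    (hwide : ∀ s t, s + k < t → t < r → A s * B t ∈ I) {i : ℕ} (hi : i < r - k) :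
    (A i * B (i + k)) ^ 2 ∈ I := by
  set p := A i * B (i + k)
  have hcross : ∑ t ∈ (Finset.range (r - k)).erase i, p * (A t * B (t + k)) ∈ I :=
    Ideal.sum_mem _ fun t ht => by
      obtain ⟨hti, ht⟩ := Finset.mem_erase.mp ht
      exact mul_mul_mem_of_wider_mul_mem hwide hi (Finset.mem_range.mp ht) hti.symm
  have hsplit : p * diagonalSum r A B k =
      p ^ 2 + ∑ t ∈ (Finset.range (r - k)).erase i, p * (A t * B (t + k)) := by
    rw [diagonalSum, Finset.mul_sum, ← Finset.add_sum_erase _ _ (Finset.mem_range.mpr hi), sq]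
  rw [show p ^ 2 = p * diagonalSum r A B k - _ from eq_sub_of_add_eq hsplit.symm]
  exact I.sub_mem (I.mul_mem_left p hG) hcross

theorem mul_mem_of_diagonalSum_mem (hI : I.IsRadical)
    (hG : ∀ k, 1 ≤ k → k ≤ r - 1 → diagonalSum r A B k ∈ I) {i j : ℕ} (hij : i < j) (hj : j < r) :
    A i * B j ∈ I := by
  induction hn : r - (j - i) using Nat.strong_induction_on generalizing i j with
  | _ n ih =>
    obtain ⟨k, rfl⟩ : ∃ k, j = i + k := ⟨j - i, by omega⟩
    have hwide : ∀ s t, s + k < t → t < r → A s * B t ∈ I := fun s t hst ht =>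
      ih (r - (t - s)) (by omega) (by omega) ht rfl
    exact hI ⟨2, sq_mem_of_diagonalSum_mem (hG k (by omega) (by omega)) hwide (by omega)⟩

end DiagonalSum

theorem upper_products_radical_general (K : Type*) [Field K] (r : ℕ)
    (A B : ℕ → MvPolynomial (Fin r ⊕ Fin r) K) :
    (Ideal.span {p | ∃ i j, i < j ∧ j < r ∧ p = A i * B j}).radical =
      (Ideal.span {q | ∃ k, 1 ≤ k ∧ k ≤ r - 1 ∧
        q = ∑ i ∈ Finset.range (r - k), A i * B (i + k)}).radical := by
  refine le_antisymm (Ideal.radical_le_radical_iff.mpr (Ideal.span_le.mpr ?_))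
    (Ideal.radical_mono (Ideal.span_le.mpr ?_))
  · rintro _ ⟨i, j, hij, hj, rfl⟩
    refine mul_mem_of_diagonalSum_mem (Ideal.radical_isRadical _) (fun k hk1 hk2 => ?_) hij hj
    exact Ideal.le_radical (Ideal.subset_span ⟨k, hk1, hk2, rfl⟩)
  · rintro _ ⟨k, hk, -, rfl⟩
    refine diagonalSum_mem_of_mul_mem (fun i j hij hj => ?_) hk
    exact Ideal.subset_span ⟨i, j, hij, hj, rfl⟩

/-- In the polynomial ring over a field `K` in variables `a 0, ..., a (r-1)`,
`b 0, ..., b (r-1)` (indexed by `Fin r ⊕ Fin r`), the radical of the ideal generated by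
all products `a i * b j` with `i < j` equals the radical of the ideal generated by the
`r - 1` polynomials `G k = ∑_{i} a i * b (i + k)`, for `k = 1, ..., r - 1`. -/
theorem upper_products_radical (K : Type*) [Field K] (r : ℕ)
    (A B : ℕ → MvPolynomial (Fin r ⊕ Fin r) K)
    (hA : ∀ i (h : i < r), A i = X (Sum.inl ⟨i, h⟩))
    (hB : ∀ i (h : i < r), B i = X (Sum.inr ⟨i, h⟩)) :
    (Ideal.span {p | ∃ i j, i < j ∧ j < r ∧ p = A i * B j}).radical =
      (Ideal.span {q | ∃ k, 1 ≤ k ∧ k ≤ r - 1 ∧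
        q = ∑ i ∈ Finset.range (r - k), A i * B (i + k)}).radical :=
  upper_products_radical_general K r A B
end

section
/- In the polynomial ring K[X_7] localization setting: for the ideal J = (X_1X_4 - X_2X_3, X_3X_6 - X_4X_5, X_1X_6 - X_2X_5, X_1X_7, X_3X_7, X_5X_7) in R = K[X_1,...,X_7], the localization J_{X_7} of J at the powers of X_7 equals the extension of the ideal (X_1, X_3, X_5) in R_{X_7}. -/
/-! Every generator of `J` lies in `(X₁, X₃, X₅)`, and conversely `X₇ · (X₁, X₃, X₅) ⊆ J`.
Since `X₇` becomes a unit in `R_{X₇}`, the two extended ideals coincide. -/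

theorem IsLocalization.Away.map_le_map_of_span_singleton_mul_le {R S : Type*} [CommSemiring R]
    [CommSemiring S] [Algebra R S] (s : R) [IsLocalization.Away s S] {I J : Ideal R}
    (h : Ideal.span {s} * I ≤ J) : I.map (algebraMap R S) ≤ J.map (algebraMap R S) :=
  calc I.map (algebraMap R S)
      = (Ideal.span {s} * I).map (algebraMap R S) := by
        rw [Ideal.map_mul, Ideal.map_span, Set.image_singleton,
          Ideal.span_singleton_eq_top.mpr (IsLocalization.Away.algebraMap_isUnit s), Ideal.top_mul]
    _ ≤ J.map (algebraMap R S) := Ideal.map_mono h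

section

/- The first three generators are the `2 × 2` minors of the matrix with rows `(a, c, e)` and
`(b, d, f)`. -/
variable {R : Type*} [CommRing R] (a b c d e f g : R)

theorem span_minors_and_mul_le_span_row :
    Ideal.span {a * d - b * c, c * f - d * e, a * f - b * e, a * g, c * g, e * g} ≤
      Ideal.span {a, c, e} := by
  have ha : a ∈ Ideal.span {a, c, e} := Ideal.subset_span (by simp)
  have hc : c ∈ Ideal.span {a, c, e} := Ideal.subset_span (by simp)
  have he : e ∈ Ideal.span {a, c, e} := Ideal.subset_span (by simp)
  simp only [Ideal.span_le, Set.insert_subset_iff, Set.singleton_subset_iff, SetLike.mem_coe]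
  exact ⟨sub_mem (Ideal.mul_mem_right _ _ ha) (Ideal.mul_mem_left _ _ hc),
    sub_mem (Ideal.mul_mem_right _ _ hc) (Ideal.mul_mem_left _ _ he),
    sub_mem (Ideal.mul_mem_right _ _ ha) (Ideal.mul_mem_left _ _ he),
    Ideal.mul_mem_right _ _ ha, Ideal.mul_mem_right _ _ hc, Ideal.mul_mem_right _ _ he⟩

theorem span_singleton_mul_span_row_le_span_minors_and_mul :
    Ideal.span {g} * Ideal.span {a, c, e} ≤
      Ideal.span {a * d - b * c, c * f - d * e, a * f - b * e, a * g, c * g, e * g} := by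
  rw [Ideal.span_mul_span', Ideal.span_le, Set.singleton_mul, Set.image_insert_eq,
    Set.image_insert_eq, Set.image_singleton]
  simp only [Set.insert_subset_iff, Set.singleton_subset_iff, SetLike.mem_coe, mul_comm g]
  exact ⟨Ideal.subset_span (by simp), Ideal.subset_span (by simp), Ideal.subset_span (by simp)⟩
end

open MvPolynomial

/-- For `J = (X₁X₄ - X₂X₃, X₃X₆ - X₄X₅, X₁X₆ - X₂X₅, X₁X₇, X₃X₇, X₅X₇)` in
`R = K[X₁,...,X₇]`, the extension of `J` to the localization `R_{X₇}` of `R` at the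
powers of `X₇` equals the extension of the ideal `(X₁, X₃, X₅)`. -/
theorem localization_J_X7 (K : Type*) [Field K] :
    Ideal.map (algebraMap (MvPolynomial (Fin 7) K)
        (Localization.Away (X 6 : MvPolynomial (Fin 7) K)))
      (Ideal.span ({X 0 * X 3 - X 1 * X 2, X 2 * X 5 - X 3 * X 4,
        X 0 * X 5 - X 1 * X 4, X 0 * X 6, X 2 * X 6, X 4 * X 6} :
          Set (MvPolynomial (Fin 7) K))) =
    Ideal.map (algebraMap (MvPolynomial (Fin 7) K)
        (Localization.Away (X 6 : MvPolynomial (Fin 7) K)))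
      (Ideal.span ({X 0, X 2, X 4} : Set (MvPolynomial (Fin 7) K))) :=
  le_antisymm (Ideal.map_mono (span_minors_and_mul_le_span_row _ _ _ _ _ _ _))
    (IsLocalization.Away.map_le_map_of_span_singleton_mul_le _
      (span_singleton_mul_span_row_le_span_minors_and_mul _ _ _ _ _ _ _))
end

section
/- Let K be a field and J = (X_1X_4 - X_2X_3, X_3X_6 - X_4X_5, X_1X_6 - X_2X_5, X_1X_7, X_3X_7, X_5X_7) in K[X_1,...,X_7]. Then √J = √(X_1X_4 - X_2X_3, X_3X_6 - X_4X_5, X_1X_6 - X_2X_5 + X_3X_7, X_1X_7, X_5X_7); in particular the zero set of J in K^7 is cut out by these 5 polynomials. -/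
open MvPolynomial

/-!
Modulo `X₃X₇` the two generating sets agree, so it suffices that `X₃X₇` lies in both radicals.
It lies in `J`, and its square lies in the five-generator ideal:
`(X₃X₇)² = X₃X₇ (X₁X₆ - X₂X₅ + X₃X₇) - X₃X₆ · X₁X₇ + X₂X₃ · X₅X₇`.
-/

section

variable {R : Type*} [CommRing R]

theorem sq_mul_mem_span_sub_add_mul (a b c e f g : R) :
    (c * g) ^ 2 ∈ Ideal.span {a * f - b * e + c * g, a * g, e * g} := by
  rw [show (c * g) ^ 2 = c * g * (a * f - b * e + c * g) - c * f * (a * g) + b * c * (e * g) by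
    ring]
  refine add_mem (sub_mem ?_ ?_) ?_ <;> exact Ideal.mul_mem_left _ _ (Ideal.subset_span (by simp))

theorem radical_span_six_eq_radical_span_five (x : Fin 7 → R) :
    (Ideal.span {x 0 * x 3 - x 1 * x 2, x 2 * x 5 - x 3 * x 4,
        x 0 * x 5 - x 1 * x 4, x 0 * x 6, x 2 * x 6, x 4 * x 6}).radical =
      (Ideal.span {x 0 * x 3 - x 1 * x 2, x 2 * x 5 - x 3 * x 4,
        x 0 * x 5 - x 1 * x 4 + x 2 * x 6, x 0 * x 6, x 4 * x 6}).radical := by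
  set J₅ : Ideal R := Ideal.span {x 0 * x 3 - x 1 * x 2, x 2 * x 5 - x 3 * x 4,
    x 0 * x 5 - x 1 * x 4 + x 2 * x 6, x 0 * x 6, x 4 * x 6}
  have mem_J₅ : ∀ p ∈ ({x 0 * x 3 - x 1 * x 2, x 2 * x 5 - x 3 * x 4,
      x 0 * x 5 - x 1 * x 4 + x 2 * x 6, x 0 * x 6, x 4 * x 6} : Set R), p ∈ J₅.radical :=
    fun p hp => J₅.le_radical (Ideal.subset_span hp)
  have x26_mem : x 2 * x 6 ∈ J₅.radical :=
    ⟨2, Ideal.span_mono (by intro p; simp +contextual)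
      (sq_mul_mem_span_sub_add_mul (x 0) (x 1) (x 2) (x 4) (x 5) (x 6))⟩
  have x05_sub_mem : x 0 * x 5 - x 1 * x 4 ∈ J₅.radical := by
    rw [show x 0 * x 5 - x 1 * x 4 = (x 0 * x 5 - x 1 * x 4 + x 2 * x 6) - x 2 * x 6 by ring]
    exact sub_mem (mem_J₅ _ (by simp)) x26_mem
  refine le_antisymm (Ideal.radical_le_radical_iff.mpr ?_) (Ideal.radical_mono ?_)
  · simp only [Ideal.span_le, Set.insert_subset_iff, Set.singleton_subset_iff, SetLike.mem_coe]
    exact ⟨mem_J₅ _ (by simp), mem_J₅ _ (by simp), x05_sub_mem, mem_J₅ _ (by simp), x26_mem,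
      mem_J₅ _ (by simp)⟩
  · simp only [J₅, Ideal.span_le, Set.insert_subset_iff, Set.singleton_subset_iff,
      SetLike.mem_coe]
    refine ⟨?_, ?_, add_mem ?_ ?_, ?_, ?_⟩ <;> exact Ideal.subset_span (by simp)

end

/-- For `J = (X₁X₄ - X₂X₃, X₃X₆ - X₄X₅, X₁X₆ - X₂X₅, X₁X₇, X₃X₇, X₅X₇)` in
`K[X₁,...,X₇]`, one has
`√J = √(X₁X₄ - X₂X₃, X₃X₆ - X₄X₅, X₁X₆ - X₂X₅ + X₃X₇, X₁X₇, X₅X₇)`: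
the zero set of `J` is cut out by these five polynomials. -/
theorem J_five_equations (K : Type*) [Field K] :
    (Ideal.span ({X 0 * X 3 - X 1 * X 2, X 2 * X 5 - X 3 * X 4,
        X 0 * X 5 - X 1 * X 4, X 0 * X 6, X 2 * X 6, X 4 * X 6} :
          Set (MvPolynomial (Fin 7) K))).radical =
      (Ideal.span ({X 0 * X 3 - X 1 * X 2, X 2 * X 5 - X 3 * X 4,
        X 0 * X 5 - X 1 * X 4 + X 2 * X 6, X 0 * X 6, X 4 * X 6} :
          Set (MvPolynomial (Fin 7) K))).radical :=
  radical_span_six_eq_radical_span_five X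
end

section
/- Let K be a field and let x_1, x_2, x_3 ∈ K satisfy the rational normal cubic curve relations: x_1x_3 = x_2^2 (where we write the scroll relations for c = 2). More generally, for a point (x_1,...,x_{c+1}) ∈ K^{c+1}: if F_j(x) = Σ_{k=0}^{j} (−1)^k C(j,k) x_{j+2}^{j−k} x_{k+1} x_{j+1}^k = 0 for all j = 1,...,c−1, then all 2-minors x_j x_{j'+1} − x_{j'} x_{j+1} (1 ≤ j < j' ≤ c) vanish. -/
/-!
Induction on `c`. If one of `x 1, …, x (c-1)` is nonzero, the minors already known to vanish make
`x 1, …, x c` a geometric progression `x (m+1) = t^m * x 1` with `x 1 ≠ 0`; on such a point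
`F (c-1)` collapses by the binomial theorem to `x 1 * (x (c+1) - t^c * x 1)^(c-1)`, so the
progression extends to `x (c+1)`. Otherwise only the last term of `F (c-1)` survives, which
is `± x c ^ c`, so `x 1 = ⋯ = x c = 0` and every minor with `j' ≤ c` vanishes trivially.
-/

namespace RationalNormalCurve

section CommRing

variable {R : Type*} [CommRing R]

/-- The form `F j` of Bardelli–Verdi. -/
def scrollForm (x : ℕ → R) (j : ℕ) : R :=
  ∑ k ∈ Finset.range (j + 1),
    (-1 : R) ^ k * (j.choose k : R) * x (j + 2) ^ (j - k) * x (k + 1) * x (j + 1) ^ k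

def HankelMinorsVanish (x : ℕ → R) (n : ℕ) : Prop :=
  ∀ j j', 1 ≤ j → j < j' → j' ≤ n → x j * x (j' + 1) - x j' * x (j + 1) = 0

theorem scrollForm_of_geometric {x : ℕ → R} {n : ℕ} {t : R}
    (hx : ∀ m ≤ n, x (m + 1) = t ^ m * x 1) :
    scrollForm x n = x 1 * (x (n + 2) - t ^ (n + 1) * x 1) ^ n := by
  rw [scrollForm, sub_eq_neg_add, add_pow, Finset.mul_sum]
  refine Finset.sum_congr rfl fun k hk => ?_
  rw [hx k (Finset.mem_range_succ_iff.mp hk), hx n le_rfl]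
  ring

theorem scrollForm_of_eq_zero {x : ℕ → R} {n : ℕ} (hx : ∀ m < n, x (m + 1) = 0) :
    scrollForm x n = (-1) ^ n * x (n + 1) ^ (n + 1) := by
  rw [scrollForm, Finset.sum_range_succ, Finset.sum_eq_zero fun k hk => by
    simp [hx k (Finset.mem_range.mp hk)]]
  simp only [Nat.choose_self, Nat.cast_one, Nat.sub_self, pow_zero, zero_add]
  ring

theorem hankelMinorsVanish_of_geometric {x : ℕ → R} {n : ℕ} {t : R}
    (hx : ∀ m ≤ n, x (m + 1) = t ^ m * x 1) : HankelMinorsVanish x n := by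
  intro j j' hj hjj' hj'
  obtain ⟨a, rfl⟩ : ∃ a, j = a + 1 := ⟨j - 1, by omega⟩
  obtain ⟨b, rfl⟩ : ∃ b, j' = b + 1 := ⟨j' - 1, by omega⟩
  rw [hx a (by omega), hx b (by omega), hx (a + 1) (by omega), hx (b + 1) (by omega)]
  ring

theorem hankelMinorsVanish_of_eq_zero {x : ℕ → R} {n : ℕ}
    (hx : ∀ a, 1 ≤ a → a ≤ n → x a = 0) : HankelMinorsVanish x n := by
  intro j j' hj hjj' hj'
  simp [hx j hj (by omega), hx j' (by omega) hj']

theorem eq_pow_mul_of_succ_eq_mul {x : ℕ → R} {n : ℕ} {t : R}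
    (hx : ∀ a, 1 ≤ a → a ≤ n → x (a + 1) = t * x a) :
    ∀ m ≤ n, x (m + 1) = t ^ m * x 1 := by
  intro m hm
  induction m with
  | zero => simp
  | succ m ih => rw [hx (m + 1) (by omega) hm, ih (by omega), pow_succ']; ring

end CommRing

section Field

variable {K : Type*} [Field K]

theorem HankelMinorsVanish.succ_eq_div_mul {x : ℕ → K} {n i : ℕ} (h : HankelMinorsVanish x n)
    (hi : 1 ≤ i) (hin : i ≤ n) (hxi : x i ≠ 0) :
    ∀ a, 1 ≤ a → a ≤ n → x (a + 1) = x (i + 1) / x i * x a := by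
  intro a ha han
  rw [div_mul_eq_mul_div, eq_div_iff hxi]
  rcases lt_trichotomy a i with hai | rfl | hia
  · linear_combination -h a i ha hai hin
  · ring
  · linear_combination h i a hi hia han

theorem HankelMinorsVanish.succ {x : ℕ → K} {n : ℕ} (hn : 1 ≤ n)
    (h : HankelMinorsVanish x n) (hF : scrollForm x n = 0) :
    HankelMinorsVanish x (n + 1) := by
  by_cases hzero : ∀ a, 1 ≤ a → a ≤ n → x a = 0
  · have hlast : x (n + 1) = 0 := by
      rw [scrollForm_of_eq_zero fun m hm => hzero (m + 1) (by omega) hm] at hF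
      simpa using hF
    refine hankelMinorsVanish_of_eq_zero fun a ha han => ?_
    rcases Nat.lt_or_eq_of_le han with han | rfl
    exacts [hzero a ha (by omega), hlast]
  push Not at hzero
  obtain ⟨i, hi, hin, hxi⟩ := hzero
  set t := x (i + 1) / x i
  have hgeo := eq_pow_mul_of_succ_eq_mul (h.succ_eq_div_mul hi hin hxi)
  have hx1 : x 1 ≠ 0 := by
    obtain ⟨m, rfl⟩ : ∃ m, i = m + 1 := ⟨i - 1, by omega⟩
    exact right_ne_zero_of_mul (hgeo m (by omega) ▸ hxi)
  have hnext : x (n + 2) = t ^ (n + 1) * x 1 := by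
    rw [scrollForm_of_geometric fun m hm => hgeo m (by omega)] at hF
    exact sub_eq_zero.mp (pow_eq_zero_iff (by omega) |>.mp ((mul_eq_zero.mp hF).resolve_left hx1))
  refine hankelMinorsVanish_of_geometric (t := t) fun m hm => ?_
  rcases Nat.lt_or_eq_of_le hm with hm | rfl
  exacts [hgeo m (by omega), hnext]

end Field

end RationalNormalCurve

open RationalNormalCurve in
theorem F_vanish_implies_minors_vanish_general (K : Type*) [Field K]
    (c : ℕ) (x : ℕ → K)
    (hF : ∀ j, 1 ≤ j → j ≤ c - 1 →
      ∑ k ∈ Finset.range (j + 1),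
        (-1 : K) ^ k * (j.choose k : K) * x (j + 2) ^ (j - k) * x (k + 1) * x (j + 1) ^ k
          = 0) :
    ∀ j j', 1 ≤ j → j < j' → j' ≤ c →
      x j * x (j' + 1) - x j' * x (j + 1) = 0 := by
  show HankelMinorsVanish x c
  induction c with
  | zero => intro j j' _ _ _; omega
  | succ n ih =>
    rcases Nat.eq_zero_or_pos n with rfl | hn
    · intro j j' _ _ _; omega
    exact (ih fun j hj hjn => hF j hj (by omega)).succ hn (hF n hn (by omega))

/-- Let `K` be an algebraically closed field and `x 1, ..., x (c+1) ∈ K`. If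
`F j = ∑_{k=0}^{j} (-1)^k C(j,k) x(j+2)^(j-k) x(k+1) x(j+1)^k` vanishes for all
`j = 1, ..., c-1`, then all `2×2` minors `x j * x (j'+1) - x j' * x (j+1)`
(for `1 ≤ j < j' ≤ c`) of the Hankel matrix with rows `(x 1, ..., x c)` and
`(x 2, ..., x (c+1))` vanish. -/
theorem F_vanish_implies_minors_vanish (K : Type*) [Field K] [IsAlgClosed K]
    (c : ℕ) (x : ℕ → K)
    (hF : ∀ j, 1 ≤ j → j ≤ c - 1 →
      ∑ k ∈ Finset.range (j + 1),
        (-1 : K) ^ k * (j.choose k : K) * x (j + 2) ^ (j - k) * x (k + 1) * x (j + 1) ^ k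
          = 0) :
    ∀ j j', 1 ≤ j → j < j' → j' ≤ c →
      x j * x (j' + 1) - x j' * x (j + 1) = 0 :=
  F_vanish_implies_minors_vanish_general K c x hF
end
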